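/- Let n be odd and k a divisor of n. Then the group G_n(k) := ⟨b, c | cbc = bcb, (cb²)^{n+1} = 1, b^k = 1, c^n = 1, b^n = 1⟩ admits a surjective homomorphism onto the triangle group T_{2,3,k} = ⟨x, y, z | x² = y³ = z^k = xyz = 1⟩. -/
import Mathlib


/-- `G_n(k) = ⟨b, c | cbc = bcb, (cb²)^{n+1} = 1, b^k = 1, c^n = 1, b^n = 1⟩`,
generators `b = of 0`, `c = of 1`. -/
def relsGnk (n k : ℕ) : Set (FreeGroup (Fin 2)) :=
  let b := FreeGroup.of (0 : Fin 2)
  let c := FreeGroup.of (1 : Fin 2)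
  {c * b * c * (b * c * b)⁻¹, (c * b ^ 2) ^ (n + 1), b ^ k, c ^ n, b ^ n}

/-- The triangle group `T_{2,3,k} = ⟨x, y, z | x² = y³ = z^k = xyz = 1⟩`,
generators `x = of 0`, `y = of 1`, `z = of 2`. -/
def relsT23k (k : ℕ) : Set (FreeGroup (Fin 3)) :=
  let x := FreeGroup.of (0 : Fin 3)
  let y := FreeGroup.of (1 : Fin 3)
  let z := FreeGroup.of (2 : Fin 3)
  {x ^ 2, y ^ 3, z ^ k, x * y * z}

/-- For `n` odd and `k ∣ n`, `G_n(k)` surjects onto the triangle group `T_{2,3,k}`. -/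
theorem stmt_9 (n k : ℕ) (hn : Odd n) (hk : k ∣ n) :
    ∃ f : PresentedGroup (relsGnk n k) →* PresentedGroup (relsT23k k),
      Function.Surjective f := by
  classical
  set T := PresentedGroup (relsT23k k) with hT
  let X : T := PresentedGroup.of 0
  let Y : T := PresentedGroup.of 1
  let Z : T := PresentedGroup.of 2
  have hrel : ∀ r ∈ relsT23k k, PresentedGroup.mk (relsT23k k) r = 1 := by
    intro r hr
    exact (QuotientGroup.eq_one_iff r).2 (Subgroup.subset_normalClosure hr)
  have hx : X ^ 2 = 1 := by
    have := hrel ((FreeGroup.of (0 : Fin 3)) ^ 2) (by left; rfl)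
    simpa [X, PresentedGroup.of, map_pow] using this
  have hy : Y ^ 3 = 1 := by
    have := hrel ((FreeGroup.of (1 : Fin 3)) ^ 3) (by right; left; rfl)
    simpa [Y, PresentedGroup.of, map_pow] using this
  have hz : Z ^ k = 1 := by
    have := hrel ((FreeGroup.of (2 : Fin 3)) ^ k) (by right; right; left; rfl)
    simpa [Z, PresentedGroup.of, map_pow] using this
  have hxyz : X * Y * Z = 1 := by
    have := hrel (FreeGroup.of (0 : Fin 3) * FreeGroup.of (1 : Fin 3) * FreeGroup.of (2 : Fin 3))
      (by right; right; right; rfl)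
    simpa [X, Y, Z, PresentedGroup.of, map_mul] using this
  -- derived facts
  have hxx : X * X = 1 := by rw [← sq]; exact hx
  have hXinv : X⁻¹ = X := inv_eq_of_mul_eq_one_right hxx
  have hYinv : Y⁻¹ = Y ^ 2 := by
    have h : Y⁻¹ * Y ^ 3 = Y ^ 2 := by group
    rw [hy, mul_one] at h; exact h
  have hYZ : Y * Z = X⁻¹ := by
    have h : X * (Y * Z) = 1 := by rw [← mul_assoc]; exact hxyz
    exact (eq_inv_of_mul_eq_one_right h)
  have hZeq : Z = Y⁻¹ * X⁻¹ := by rw [← hYZ]; group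
  -- the map
  let g : Fin 2 → T := ![X⁻¹ * Y ^ 2, Y⁻¹ * X]
  have hg0 : g 0 = X⁻¹ * Y ^ 2 := rfl
  have hg1 : g 1 = Y⁻¹ * X := rfl
  have hb : g 0 = Y * Z * Y⁻¹ := by
    rw [hg0, hZeq, ← hYinv]; group
  have hcbc : g 1 * g 0 * g 1 = X := by rw [hg0, hg1]; group
  have hbcb : g 0 * g 1 * g 0 = X := by
    have h : g 0 * g 1 * g 0 = X⁻¹ * Y ^ 3 := by rw [hg0, hg1]; group
    rw [h, hy, mul_one, hXinv]
  have hcb : g 1 * g 0 = Y := by rw [hg0, hg1]; group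
  have hy' : Y * Y * Y = 1 := by
    rw [← hy, show Y ^ 3 = Y ^ 2 * Y from pow_succ Y 2, sq]
  have hw2 : (g 1 * g 0 ^ 2) ^ 2 = 1 := by
    have h : (g 1 * g 0 ^ 2) ^ 2
        = Y * X⁻¹ * (Y * Y * Y) * (X⁻¹ * (Y * Y)) := by simp only [hg0, hg1, sq]; group
    rw [h, hy', mul_one, hXinv]
    have h2 : Y * X * (X * (Y * Y)) = Y * (X * X) * (Y * Y) := by group
    rw [h2, hxx, mul_one]
    have h3 : Y * (Y * Y) = Y * Y * Y := by group
    rw [h3]; exact hy'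
  obtain ⟨a, ha⟩ := hn
  obtain ⟨m, hm⟩ := hk
  have hbk : g 0 ^ k = 1 := by
    rw [hb, conj_pow, hz, mul_one, mul_inv_cancel]
  have hbn : g 0 ^ n = 1 := by
    rw [hb, conj_pow, hm, pow_mul, hz, one_pow, mul_one, mul_inv_cancel]
  have hcZ : g 1 = Z := by rw [hg1, hZeq, hXinv]
  have hcn : g 1 ^ n = 1 := by rw [hcZ, hm, pow_mul, hz, one_pow]
  have hwn : (g 1 * g 0 ^ 2) ^ (n + 1) = 1 := by
    have h21 : n + 1 = 2 * (a + 1) := by omega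
    rw [h21, pow_mul, hw2, one_pow]
  -- lift relations
  have hlift : ∀ r ∈ relsGnk n k, FreeGroup.lift g r = 1 := by
    intro r hr
    rcases hr with h | h | h | h | h
    · subst h
      simp only [map_mul, map_inv, FreeGroup.lift_apply_of]
      rw [hcbc, hbcb, mul_inv_cancel]
    · rw [h]
      simp only [map_pow, map_mul, FreeGroup.lift_apply_of]
      exact hwn
    · rw [h]
      simp only [map_pow, FreeGroup.lift_apply_of]
      exact hbk
    · rw [h]
      simp only [map_pow, FreeGroup.lift_apply_of]
      exact hcn
    · rw [Set.mem_singleton_iff] at h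
      rw [h]
      simp only [map_pow, FreeGroup.lift_apply_of]
      exact hbn
  refine ⟨PresentedGroup.toGroup hlift, ?_⟩
  have hof : ∀ i : Fin 2, PresentedGroup.toGroup hlift (PresentedGroup.of i) = g i :=
    fun i => PresentedGroup.toGroup.of hlift
  rw [← MonoidHom.range_eq_top]
  rw [eq_top_iff, ← PresentedGroup.closure_range_of (relsT23k k)]
  rw [Subgroup.closure_le]
  rintro t ⟨i, rfl⟩
  fin_cases i
  · -- X
    exact ⟨PresentedGroup.of 1 * PresentedGroup.of 0 * PresentedGroup.of 1,
      by simp only [map_mul, hof]; exact hcbc⟩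
  · -- Y
    exact ⟨PresentedGroup.of 1 * PresentedGroup.of 0,
      by simp only [map_mul, hof]; exact hcb⟩
  · -- Z
    refine ⟨(PresentedGroup.of 1 * PresentedGroup.of 0)⁻¹ *
      (PresentedGroup.of 1 * PresentedGroup.of 0 * PresentedGroup.of 1)⁻¹, ?_⟩
    simp only [map_mul, map_inv, hof]
    rw [show (g 1 * g 0)⁻¹ * (g 1 * g 0 * g 1)⁻¹ = ((g 1 * g 0 * g 1) * (g 1 * g 0))⁻¹ by group]
    rw [hcbc, hcb]
    show (X * Y)⁻¹ = Z
    rw [hZeq]; group
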